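/- The jointly normalized affinities computed from Kabsch-aligned pathways are invariant under the joint SE(3) action: let Y⋆ be a reference pathway, {X_j}_{j=1}^K a swarm of pathways, and for each i let R_i ∈ SO(3) and aligned pathway X̃_i = R_i(X_i − X̄_i) + Ȳ⋆ (centroids over all F·N atoms, broadcast). Suppose that when g = (R,t) ∈ SE(3) acts frame-wise on Y⋆ and on every X_j, the alignment rotations transform as R_i ↦ R R_i Rᵀ. Then the aligned pathways transform as X̃_i ↦ g·X̃_i, all pairwise aligned distances d(X̃_i, T_j) with T = (Y⋆, X̃_1, …, X̃_K) are unchanged, and therefore the logits L_{ij} = −d(X̃_i, T_j)/τ, the row and column softmaxes, and the geometric-mean joint affinities A_{ij} = √(σ_row(L)_{ij} · σ_col(L)_{ij}) are all invariant. -/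

import Mathlib

/-!
STATEMENT 11: The jointly normalized affinities computed from Kabsch-aligned
pathways are invariant under the joint SE(3) action. With reference pathway
`Y⋆`, swarm `{X_j}`, alignment rotations `R_i ∈ SO(3)` and aligned pathways
`X̃_i = R_i(X_i − X̄_i) + Ȳ⋆`, suppose that when `g = (R,t) ∈ SE(3)` acts
frame-wise on `Y⋆` and every `X_j`, the alignment rotations transform as
`R_i ↦ R R_i Rᵀ`. Then the aligned pathways transform as `X̃_i ↦ g·X̃_i`, all
pairwise aligned distances `d(X̃_i, T_j)` (with `T = (Y⋆, X̃_1, …, X̃_K)`) are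
unchanged, and therefore the logits `L_{ij} = −d(X̃_i, T_j)/τ`, the row and
column softmaxes, and the geometric-mean joint affinities
`A_{ij} = √(σ_row(L)_{ij} σ_col(L)_{ij})` are all invariant.
-/

open Matrix

noncomputable section

/-- 3-dimensional Euclidean space for atom positions. -/
abbrev E3 := EuclideanSpace ℝ (Fin 3)

/-- Pathway space `(ℝ^{3N})^F`. -/
abbrev Pathw (F N : ℕ) := Fin F → Fin N → E3

/-- Pathway distance `d(X,Y) = (1/√(3M)) √(Σ_k Σ_n ‖X_k⁽ⁿ⁾ − Y_k⁽ⁿ⁾‖²)`. -/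
def pdist {F N : ℕ} (X Y : Pathw F N) : ℝ :=
  (Real.sqrt (3 * (F * N : ℕ)))⁻¹ * Real.sqrt (∑ k, ∑ n, ‖X k n - Y k n‖ ^ 2)

/-- Frame-wise SE(3) action on pathways: `(g·X)_k⁽ⁿ⁾ = R X_k⁽ⁿ⁾ + t`. -/
def pact {F N : ℕ} (R : Matrix (Fin 3) (Fin 3) ℝ) (t : E3) (X : Pathw F N) :
    Pathw F N :=
  fun k n => Matrix.toEuclideanLin R (X k n) + t

/-- Centroid of a pathway over all `M = F·N` atoms. -/
def pcent {F N : ℕ} (P : Pathw F N) : E3 :=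
  (((F * N : ℕ) : ℝ))⁻¹ • ∑ k, ∑ n, P k n

/-- Kabsch alignment of a pathway: `X̃ = R₀(X − X̄) + c` (centroid broadcast). -/
def palign {F N : ℕ} (R₀ : Matrix (Fin 3) (Fin 3) ℝ) (c : E3) (P : Pathw F N) :
    Pathw F N :=
  fun k n => Matrix.toEuclideanLin R₀ (P k n - pcent P) + c

/-- The aligned swarm: `X̃_i = R_i(X_i − X̄_i) + Ȳ⋆`. -/
def alignedSwarm {F N K : ℕ} (Ri : Fin K → Matrix (Fin 3) (Fin 3) ℝ)
    (Ystar : Pathw F N) (X : Fin K → Pathw F N) : Fin K → Pathw F N :=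
  fun i => palign (Ri i) (pcent Ystar) (X i)

/-- Augmented target set `T = (Y⋆, X̃_1, …, X̃_K)`. -/
def targets {F N K : ℕ} (Ystar : Pathw F N) (Xt : Fin K → Pathw F N) :
    Fin (K + 1) → Pathw F N :=
  Fin.cons Ystar Xt

/-- Pairwise logits `L_{ij} = −d(X̃_i, T_j)/τ`. -/
def logits {F N K : ℕ} (τ : ℝ) (Ri : Fin K → Matrix (Fin 3) (Fin 3) ℝ)
    (Ystar : Pathw F N) (X : Fin K → Pathw F N) :
    Fin K → Fin (K + 1) → ℝ :=
  fun i j =>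
    -(pdist (alignedSwarm Ri Ystar X i) (targets Ystar (alignedSwarm Ri Ystar X) j)) / τ

/-- Row softmax `σ_row(L)_{ij} = exp(L_{ij})/Σ_{j'} exp(L_{ij'})`. -/
def rowSoftmax {K : ℕ} (L : Fin K → Fin (K + 1) → ℝ) (i : Fin K)
    (j : Fin (K + 1)) : ℝ :=
  Real.exp (L i j) / ∑ j', Real.exp (L i j')

/-- Column softmax `σ_col(L)_{ij} = exp(L_{ij})/Σ_{i'} exp(L_{i'j})`. -/
def colSoftmax {K : ℕ} (L : Fin K → Fin (K + 1) → ℝ) (i : Fin K)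
    (j : Fin (K + 1)) : ℝ :=
  Real.exp (L i j) / ∑ i', Real.exp (L i' j)

/-- Geometric-mean joint affinities `A_{ij} = √(σ_row(L)_{ij} σ_col(L)_{ij})`
computed from the Kabsch-aligned pathway-distance logits. -/
def affinity {F N K : ℕ} (τ : ℝ) (Ri : Fin K → Matrix (Fin 3) (Fin 3) ℝ)
    (Ystar : Pathw F N) (X : Fin K → Pathw F N) :
    Fin K → Fin (K + 1) → ℝ :=
  fun i j =>
    Real.sqrt (rowSoftmax (logits τ Ri Ystar X) i j * colSoftmax (logits τ Ri Ystar X) i j)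


/-!
A motion `g = (R, t)` moves every centroid by `g`, so centring cancels `t`, and since
`(R R₀ Rᵀ) R = R R₀` the conjugated alignment rotation turns `R₀ (X − X̄) + Ȳ⋆` into
`R (R₀ (X − X̄) + Ȳ⋆) + t`: every aligned pathway, like `Y⋆` itself, is moved by `g`.
As `g` is an isometry for `pdist`, the distances to the targets, hence the logits and
everything computed from them, are unchanged.
-/

namespace Matrix

variable {n : Type*} [Fintype n] [DecidableEq n]

theorem norm_toEuclideanLin_of_mem_orthogonalGroup {R : Matrix n n ℝ}
    (hR : R ∈ orthogonalGroup n ℝ) (v : EuclideanSpace ℝ n) :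
    ‖toEuclideanLin R v‖ = ‖v‖ :=
  ContinuousLinearMap.norm_map_of_mem_unitary (Unitary.map_mem (toEuclideanCLM (𝕜 := ℝ)) hR) v

theorem toEuclideanLin_conj_apply {R : Matrix n n ℝ} (hR : R ∈ orthogonalGroup n ℝ)
    (R₀ : Matrix n n ℝ) (v : EuclideanSpace ℝ n) :
    toEuclideanLin (R * R₀ * Rᵀ) (toEuclideanLin R v)
      = toEuclideanLin R (toEuclideanLin R₀ v) := by
  have hRtR : Rᵀ * R = 1 := (mem_orthogonalGroup_iff' ..).mp hR
  rw [← LinearMap.comp_apply, ← toLpLin_mul_same, Matrix.mul_assoc, hRtR, Matrix.mul_one,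
    toLpLin_mul_same, LinearMap.comp_apply]

end Matrix

section Pathways

variable {F N : ℕ}

theorem pcent_pact (hFN : F * N ≠ 0) (R : Matrix (Fin 3) (Fin 3) ℝ) (t : E3) (P : Pathw F N) :
    pcent (pact R t P) = Matrix.toEuclideanLin R (pcent P) + t := by
  have hM : ((F * N : ℕ) : ℝ) ≠ 0 := Nat.cast_ne_zero.mpr hFN
  have hsum : ∑ k, ∑ n, pact R t P k n
      = Matrix.toEuclideanLin R (∑ k, ∑ n, P k n) + ((F * N : ℕ) : ℝ) • t := by
    simp [pact, Finset.sum_add_distrib, map_sum, mul_smul, Nat.cast_smul_eq_nsmul]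
  rw [pcent, hsum, smul_add, smul_smul, inv_mul_cancel₀ hM, one_smul, pcent, map_smul]

theorem palign_pact {R : Matrix (Fin 3) (Fin 3) ℝ} (hR : R ∈ Matrix.orthogonalGroup (Fin 3) ℝ)
    (t : E3) (R₀ : Matrix (Fin 3) (Fin 3) ℝ) (c : E3) (P : Pathw F N) :
    palign (R * R₀ * Rᵀ) (Matrix.toEuclideanLin R c + t) (pact R t P)
      = pact R t (palign R₀ c P) := by
  funext k n
  have hFN : F * N ≠ 0 := Nat.mul_ne_zero k.pos.ne' n.pos.ne'
  have hcentred :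
      pact R t P k n - pcent (pact R t P) = Matrix.toEuclideanLin R (P k n - pcent P) := by
    rw [pcent_pact hFN, pact, map_sub]
    abel
  change Matrix.toEuclideanLin (R * R₀ * Rᵀ) (pact R t P k n - pcent (pact R t P))
      + (Matrix.toEuclideanLin R c + t)
    = Matrix.toEuclideanLin R (Matrix.toEuclideanLin R₀ (P k n - pcent P) + c) + t
  rw [hcentred, Matrix.toEuclideanLin_conj_apply hR, map_add, add_assoc]

theorem alignedSwarm_pact {K : ℕ} {R : Matrix (Fin 3) (Fin 3) ℝ}
    (hR : R ∈ Matrix.orthogonalGroup (Fin 3) ℝ) (t : E3)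
    (Ri : Fin K → Matrix (Fin 3) (Fin 3) ℝ)
    (Ystar : Pathw F N) (X : Fin K → Pathw F N) :
    alignedSwarm (fun i => R * Ri i * Rᵀ) (pact R t Ystar) (fun j => pact R t (X j))
      = fun i => pact R t (alignedSwarm Ri Ystar X i) := by
  funext i k n
  have hFN : F * N ≠ 0 := Nat.mul_ne_zero k.pos.ne' n.pos.ne'
  rw [alignedSwarm, pcent_pact hFN, palign_pact hR, alignedSwarm]

theorem targets_pact {K : ℕ} (R : Matrix (Fin 3) (Fin 3) ℝ) (t : E3) (Ystar : Pathw F N)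
    (Xt : Fin K → Pathw F N) :
    targets (pact R t Ystar) (fun i => pact R t (Xt i)) = fun j => pact R t (targets Ystar Xt j) :=
  (Fin.comp_cons (pact R t) Ystar Xt).symm

theorem pdist_pact {R : Matrix (Fin 3) (Fin 3) ℝ} (hR : R ∈ Matrix.orthogonalGroup (Fin 3) ℝ)
    (t : E3) (A B : Pathw F N) :
    pdist (pact R t A) (pact R t B) = pdist A B := by
  have hdiff : ∀ k n, pact R t A k n - pact R t B k n = Matrix.toEuclideanLin R (A k n - B k n) :=
    fun k n => by rw [pact, pact, map_sub]; abel
  simp only [pdist, hdiff, Matrix.norm_toEuclideanLin_of_mem_orthogonalGroup hR]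

theorem pdist_alignedSwarm_targets_pact {K : ℕ} {R : Matrix (Fin 3) (Fin 3) ℝ}
    (hR : R ∈ Matrix.orthogonalGroup (Fin 3) ℝ) (t : E3)
    (Ri : Fin K → Matrix (Fin 3) (Fin 3) ℝ)
    (Ystar : Pathw F N) (X : Fin K → Pathw F N) (i : Fin K) (j : Fin (K + 1)) :
    pdist (alignedSwarm (fun i => R * Ri i * Rᵀ) (pact R t Ystar) (fun j => pact R t (X j)) i)
        (targets (pact R t Ystar)
          (alignedSwarm (fun i => R * Ri i * Rᵀ) (pact R t Ystar) (fun j => pact R t (X j))) j)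
      = pdist (alignedSwarm Ri Ystar X i) (targets Ystar (alignedSwarm Ri Ystar X) j) := by
  simp only [alignedSwarm_pact hR, targets_pact, pdist_pact hR]

theorem logits_pact {K : ℕ} (τ : ℝ) {R : Matrix (Fin 3) (Fin 3) ℝ}
    (hR : R ∈ Matrix.orthogonalGroup (Fin 3) ℝ) (t : E3)
    (Ri : Fin K → Matrix (Fin 3) (Fin 3) ℝ)
    (Ystar : Pathw F N) (X : Fin K → Pathw F N) :
    logits τ (fun i => R * Ri i * Rᵀ) (pact R t Ystar) (fun j => pact R t (X j))
      = logits τ Ri Ystar X := by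
  funext i j
  rw [logits, logits, pdist_alignedSwarm_targets_pact hR]

end Pathways

theorem affinity_SE3_invariant_general {F N K : ℕ} (τ : ℝ)
    (R : Matrix (Fin 3) (Fin 3) ℝ)
    (hR : R ∈ Matrix.orthogonalGroup (Fin 3) ℝ)
    (t : E3)
    (Ri : Fin K → Matrix (Fin 3) (Fin 3) ℝ)
    (Ystar : Pathw F N) (X : Fin K → Pathw F N) :
    (∀ i, alignedSwarm (fun i => R * Ri i * Rᵀ) (pact R t Ystar)
        (fun j => pact R t (X j)) i = pact R t (alignedSwarm Ri Ystar X i)) ∧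
    (∀ i j, pdist
        (alignedSwarm (fun i => R * Ri i * Rᵀ) (pact R t Ystar)
          (fun j => pact R t (X j)) i)
        (targets (pact R t Ystar)
          (alignedSwarm (fun i => R * Ri i * Rᵀ) (pact R t Ystar)
            (fun j => pact R t (X j))) j)
      = pdist (alignedSwarm Ri Ystar X i)
          (targets Ystar (alignedSwarm Ri Ystar X) j)) ∧
    (∀ i j, logits τ (fun i => R * Ri i * Rᵀ) (pact R t Ystar)
        (fun j => pact R t (X j)) i j = logits τ Ri Ystar X i j) ∧
    (∀ i j, rowSoftmax (logits τ (fun i => R * Ri i * Rᵀ) (pact R t Ystar)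
          (fun j => pact R t (X j))) i j
        = rowSoftmax (logits τ Ri Ystar X) i j) ∧
    (∀ i j, colSoftmax (logits τ (fun i => R * Ri i * Rᵀ) (pact R t Ystar)
          (fun j => pact R t (X j))) i j
        = colSoftmax (logits τ Ri Ystar X) i j) ∧
    (∀ i j, affinity τ (fun i => R * Ri i * Rᵀ) (pact R t Ystar)
        (fun j => pact R t (X j)) i j = affinity τ Ri Ystar X i j) := by
  have hlogits := logits_pact τ hR t Ri Ystar X
  exact ⟨congrFun (alignedSwarm_pact hR t Ri Ystar X),
    pdist_alignedSwarm_targets_pact hR t Ri Ystar X,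
    fun i j => by rw [hlogits], fun i j => by rw [hlogits], fun i j => by rw [hlogits],
    fun i j => by rw [affinity, affinity, hlogits]⟩

/-- Invariance of the aligned pathways (up to the joint motion `g`), of all
pairwise aligned distances, of the logits, of the row and column softmaxes,
and of the joint affinities, under the joint SE(3) action with alignment
rotations transforming by conjugation `R_i ↦ R R_i Rᵀ`. -/
theorem affinity_SE3_invariant {F N K : ℕ} (τ : ℝ) (hτ : 0 < τ)
    (R : Matrix (Fin 3) (Fin 3) ℝ)
    (hR : R ∈ Matrix.orthogonalGroup (Fin 3) ℝ) (hdet : R.det = 1)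
    (t : E3)
    (Ri : Fin K → Matrix (Fin 3) (Fin 3) ℝ)
    (hRi : ∀ i, Ri i ∈ Matrix.orthogonalGroup (Fin 3) ℝ ∧ (Ri i).det = 1)
    (Ystar : Pathw F N) (X : Fin K → Pathw F N) :
    (∀ i, alignedSwarm (fun i => R * Ri i * Rᵀ) (pact R t Ystar)
        (fun j => pact R t (X j)) i = pact R t (alignedSwarm Ri Ystar X i)) ∧
    (∀ i j, pdist
        (alignedSwarm (fun i => R * Ri i * Rᵀ) (pact R t Ystar)
          (fun j => pact R t (X j)) i)
        (targets (pact R t Ystar)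
          (alignedSwarm (fun i => R * Ri i * Rᵀ) (pact R t Ystar)
            (fun j => pact R t (X j))) j)
      = pdist (alignedSwarm Ri Ystar X i)
          (targets Ystar (alignedSwarm Ri Ystar X) j)) ∧
    (∀ i j, logits τ (fun i => R * Ri i * Rᵀ) (pact R t Ystar)
        (fun j => pact R t (X j)) i j = logits τ Ri Ystar X i j) ∧
    (∀ i j, rowSoftmax (logits τ (fun i => R * Ri i * Rᵀ) (pact R t Ystar)
          (fun j => pact R t (X j))) i j
        = rowSoftmax (logits τ Ri Ystar X) i j) ∧
    (∀ i j, colSoftmax (logits τ (fun i => R * Ri i * Rᵀ) (pact R t Ystar)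
          (fun j => pact R t (X j))) i j
        = colSoftmax (logits τ Ri Ystar X) i j) ∧
    (∀ i j, affinity τ (fun i => R * Ri i * Rᵀ) (pact R t Ystar)
        (fun j => pact R t (X j)) i j = affinity τ Ri Ystar X i j) :=
  affinity_SE3_invariant_general τ R hR t Ri Ystar X
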